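/- arXiv:0903.4987 — 4 statements merged into one kernel-verified Lean document; each statement's English description precedes it below -/
import Mathlib

section
/- Let φ be an 𝔖∞-central state on G = Γ≀𝔖∞ with GNS triple (π, H, ξ). Then for every i ∈ ℕ there exists a bounded self-adjoint operator O_i on H with ‖O_i‖ ≤ 1 such that for all x, y ∈ H, ⟨π((i j))x, y⟩ → ⟨O_i x, y⟩ as j → ∞ (j ranging over ℕ∖{i}), where (i j) ∈ 𝔖∞ denotes the transposition of i and j; i.e. the weak operator limit of π((i j)) as j → ∞ exists. -/
open scoped Classical ComplexOrder
open Filter Topology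

noncomputable section

namespace DN

local notation "⟪" x ", " y "⟫" => @inner ℂ _ _ x y

/-- The group `𝔖∞` of finitely supported permutations of `ℕ`. -/
def SInf : Subgroup (Equiv.Perm ℕ) where
  carrier := {s | {i | s i ≠ i}.Finite}
  one_mem' := by simp
  mul_mem' := by
    intro s t hs ht
    refine Set.Finite.subset (hs.union ht) fun i hi => ?_
    simp only [Set.mem_setOf_eq, Set.mem_union, Equiv.Perm.mul_apply] at hi ⊢
    by_contra h
    push_neg at h
    rw [h.2, h.1] at hi
    exact hi rfl
  inv_mem' := by
    intro s hs
    refine Set.Finite.subset hs fun i hi => ?_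
    simp only [Set.mem_setOf_eq] at hi ⊢
    intro h
    exact hi (Equiv.Perm.inv_eq_iff_eq.mpr h.symm)

theorem mem_SInf (s : Equiv.Perm ℕ) : s ∈ SInf ↔ {i | s i ≠ i}.Finite := Iff.rfl

/-- The group `Γ^∞_e` of finitely supported sequences in `Γ`. -/
def GammaE (Γ : Type*) [Group Γ] : Subgroup (ℕ → Γ) where
  carrier := {γ | {i | γ i ≠ 1}.Finite}
  one_mem' := by simp
  mul_mem' := by
    intro f g hf hg
    refine Set.Finite.subset (hf.union hg) fun i hi => ?_
    simp only [Set.mem_setOf_eq, Set.mem_union, Pi.mul_apply] at hi ⊢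
    by_contra h
    push_neg at h
    rw [h.1, h.2] at hi
    exact hi (one_mul 1)
  inv_mem' := by
    intro f hf
    refine Set.Finite.subset hf fun i hi => ?_
    simp only [Set.mem_setOf_eq, Pi.inv_apply, ne_eq, inv_eq_one] at hi ⊢
    exact hi

theorem mem_GammaE {Γ : Type*} [Group Γ] (γ : ℕ → Γ) :
    γ ∈ GammaE Γ ↔ {i | γ i ≠ 1}.Finite := Iff.rfl

/-- The permutation action of `Equiv.Perm ℕ` on `ℕ → Γ`. -/
def permMulAut (Γ : Type*) [Group Γ] (s : Equiv.Perm ℕ) : MulAut (ℕ → Γ) where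
  toFun γ := γ ∘ s.symm
  invFun γ := γ ∘ s
  left_inv γ := by funext i; simp [Function.comp]
  right_inv γ := by funext i; simp [Function.comp]
  map_mul' γ δ := rfl

def permAction (Γ : Type*) [Group Γ] : Equiv.Perm ℕ →* MulAut (ℕ → Γ) where
  toFun := permMulAut Γ
  map_one' := by ext γ i; rfl
  map_mul' s t := by ext γ i; rfl

/-- The (big) wreath product `(ℕ → Γ) ⋊ Perm ℕ`. -/
abbrev W (Γ : Type*) [Group Γ] := (ℕ → Γ) ⋊[permAction Γ] Equiv.Perm ℕ

/-- The wreath product `G = Γ ≀ 𝔖∞`, as the subgroup of `W Γ` of finitely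
supported elements. -/
def WG (Γ : Type*) [Group Γ] : Subgroup (W Γ) where
  carrier := {g | {i | g.right i ≠ i}.Finite ∧ {i | g.left i ≠ 1}.Finite}
  one_mem' := by
    constructor
    · convert Set.finite_empty using 1
      ext i; simp
    · convert Set.finite_empty using 1
      ext i; simp
  mul_mem' := by
    rintro a b ⟨ha1, ha2⟩ ⟨hb1, hb2⟩
    constructor
    · refine Set.Finite.subset (ha1.union hb1) fun i hi => ?_
      simp only [Set.mem_setOf_eq, Set.mem_union, SemidirectProduct.mul_right,
        Equiv.Perm.mul_apply] at hi ⊢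
      by_contra h
      push_neg at h
      rw [h.2, h.1] at hi
      exact hi rfl
    · refine Set.Finite.subset (ha2.union (hb2.image a.right)) fun i hi => ?_
      simp only [Set.mem_setOf_eq, SemidirectProduct.mul_left, Pi.mul_apply] at hi
      by_contra h
      simp only [Set.mem_union, Set.mem_setOf_eq, Set.mem_image, not_or, not_exists,
        not_and, not_not] at h
      obtain ⟨h1, h2⟩ := h
      apply hi
      have hb : b.left (a.right⁻¹ i) = 1 := by
        by_contra hc
        exact h2 (a.right⁻¹ i) hc (by simp)
      have hrfl : (permAction Γ a.right b.left) i = b.left (a.right⁻¹ i) := rfl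
      rw [h1, one_mul, hrfl, hb]
  inv_mem' := by
    rintro a ⟨ha1, ha2⟩
    constructor
    · refine Set.Finite.subset ha1 fun i hi => ?_
      simp only [Set.mem_setOf_eq, SemidirectProduct.inv_right] at hi ⊢
      intro h
      exact hi (Equiv.Perm.inv_eq_iff_eq.mpr h.symm)
    · refine Set.Finite.subset (Set.Finite.preimage (a.right.injective.injOn) ha2)
        fun i hi => ?_
      simp only [Set.mem_setOf_eq] at hi
      simp only [Set.mem_preimage, Set.mem_setOf_eq]
      intro h
      apply hi
      have hrfl : (a⁻¹).left i = (a.left (a.right i))⁻¹ := rfl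
      rw [hrfl, h, inv_one]

theorem mem_WG {Γ : Type*} [Group Γ] (g : W Γ) :
    g ∈ WG Γ ↔ {i | g.right i ≠ i}.Finite ∧ {i | g.left i ≠ 1}.Finite := Iff.rfl

/-- The canonical copy of `𝔖∞` inside `Γ ≀ 𝔖∞`. -/
def permW {Γ : Type*} [Group Γ] (s : SInf) : WG Γ :=
  ⟨SemidirectProduct.inr s.1, by
    rw [mem_WG]
    constructor
    · have h : (SemidirectProduct.inr s.1 : W Γ).right = s.1 := SemidirectProduct.right_inr _
      rw [h]
      exact s.2
    · convert Set.finite_empty using 1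
      ext i; simp⟩

/-- The canonical copy of `Γ^∞_e` inside `Γ ≀ 𝔖∞`. -/
def seqW {Γ : Type*} [Group Γ] (γ : GammaE Γ) : WG Γ :=
  ⟨SemidirectProduct.inl γ.1, by
    rw [mem_WG]
    constructor
    · convert Set.finite_empty using 1
      ext i; simp
    · have h : (SemidirectProduct.inl γ.1 : W Γ).left = γ.1 := SemidirectProduct.left_inl _
      rw [h]
      exact γ.2⟩

/-- The support of an element of `Γ ≀ 𝔖∞`. -/
def supp {Γ : Type*} [Group Γ] (g : WG Γ) : Set ℕ :=
  {i | (g : W Γ).right i ≠ i ∨ (g : W Γ).left i ≠ 1}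

/-- Positive definiteness of a function on a group. -/
def IsPosDef {G : Type*} [Group G] (φ : G → ℂ) : Prop :=
  ∀ (m : ℕ) (g : Fin m → G) (c : Fin m → ℂ),
    0 ≤ ∑ i, ∑ j, c i * (starRingEnd ℂ) (c j) * φ ((g j)⁻¹ * g i)

/-- A state on a group: normalized positive definite function. -/
def IsState {G : Type*} [Group G] (φ : G → ℂ) : Prop := φ 1 = 1 ∧ IsPosDef φ

/-- `𝔖∞`-centrality of a function on `Γ ≀ 𝔖∞`. -/
def IsSCentral {Γ : Type*} [Group Γ] (φ : WG Γ → ℂ) : Prop :=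
  ∀ (s : SInf) (g : WG Γ), φ (permW s * g * (permW s)⁻¹) = φ g

/-- The commutant of a set of bounded operators. -/
def commutant {H : Type*} [NormedAddCommGroup H] [InnerProductSpace ℂ H]
    (S : Set (H →L[ℂ] H)) : Set (H →L[ℂ] H) := {T | ∀ A ∈ S, T * A = A * T}

variable {Γ : Type*} [Group Γ]
variable {H : Type*} [NormedAddCommGroup H] [InnerProductSpace ℂ H] [CompleteSpace H]

/-- The image set `π(G)` of a representation. -/
def repSet (π : WG Γ →* (H →L[ℂ] H)) : Set (H →L[ℂ] H) := Set.range fun g : WG Γ => π g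

/-- The von Neumann algebra `π(G)''` (double commutant). -/
def vN (π : WG Γ →* (H →L[ℂ] H)) : Set (H →L[ℂ] H) := commutant (commutant (repSet π))

/-- The representation is factorial: the center `π(G)' ∩ π(G)''` consists of scalars. -/
def IsFactorial (π : WG Γ →* (H →L[ℂ] H)) : Prop :=
  ∀ T ∈ commutant (repSet π) ∩ vN π, ∃ c : ℂ, T = c • (1 : H →L[ℂ] H)

/-- `(π, H, ξ)` is a GNS triple for `φ`. -/
structure IsGNS (φ : WG Γ → ℂ) (π : WG Γ →* (H →L[ℂ] H)) (ξ : H) : Prop where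
  unitary : ∀ g, π g ∈ unitary (H →L[ℂ] H)
  norm_one : ‖ξ‖ = 1
  cyclic : Dense ((Submodule.span ℂ (Set.range fun g : WG Γ => π g ξ) : Submodule ℂ H) : Set H)
  inner_eq : ∀ g, φ g = ⟪ξ, π g ξ⟫

theorem swap_mem_SInf (a b : ℕ) : Equiv.swap a b ∈ SInf := by
  rw [mem_SInf]
  refine Set.Finite.subset ((Set.finite_singleton a).insert b) fun i hi => ?_
  simp only [Set.mem_setOf_eq] at hi
  simp only [Set.mem_insert_iff, Set.mem_singleton_iff]
  by_contra h
  push_neg at h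
  exact hi (Equiv.swap_apply_of_ne_of_ne h.2 h.1)

/-- The transposition `(a b)` as an element of `Γ ≀ 𝔖∞`. -/
def swapW {Γ : Type*} [Group Γ] (a b : ℕ) : WG Γ := permW ⟨Equiv.swap a b, swap_mem_SInf a b⟩

def omegaFun (n i : ℕ) : ℕ := if i < n then i + n else if i < 2 * n then i - n else i

theorem omegaFun_invol (n i : ℕ) : omegaFun n (omegaFun n i) = i := by
  unfold omegaFun
  split_ifs <;> first | contradiction | omega

/-- Olshanski's permutation `ω_n`. -/
def omegaPerm (n : ℕ) : Equiv.Perm ℕ :=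
  ⟨omegaFun n, omegaFun n, omegaFun_invol n, omegaFun_invol n⟩

theorem omegaPerm_mem (n : ℕ) : omegaPerm n ∈ SInf := by
  rw [mem_SInf]
  refine Set.Finite.subset (Set.finite_Iio (2 * n)) fun i hi => ?_
  simp only [Set.mem_setOf_eq] at hi
  simp only [Set.mem_Iio]
  by_contra h
  push_neg at h
  apply hi
  show omegaFun n i = i
  unfold omegaFun
  split_ifs <;> first | contradiction | omega

/-- `ω_n` as an element of `Γ ≀ 𝔖∞`. -/
def omegaW {Γ : Type*} [Group Γ] (n : ℕ) : WG Γ := permW ⟨omegaPerm n, omegaPerm_mem n⟩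

def sigmaFun (n i : ℕ) : ℕ := if i + 1 < n then i + 1 else if i + 1 = n then 0 else i

def sigmaInvFun (n i : ℕ) : ℕ := if i < n then (if i = 0 then n - 1 else i - 1) else i

theorem sigma_left_inv (n i : ℕ) : sigmaInvFun n (sigmaFun n i) = i := by
  unfold sigmaFun sigmaInvFun
  split_ifs <;> first | contradiction | omega

theorem sigma_right_inv (n i : ℕ) : sigmaFun n (sigmaInvFun n i) = i := by
  unfold sigmaFun sigmaInvFun
  split_ifs <;> first | contradiction | omega

/-- The cycle `σ_n = (0 1 2 ... n-1)`. -/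
def sigmaPerm (n : ℕ) : Equiv.Perm ℕ :=
  ⟨sigmaFun n, sigmaInvFun n, sigma_left_inv n, sigma_right_inv n⟩

theorem sigmaPerm_mem (n : ℕ) : sigmaPerm n ∈ SInf := by
  rw [mem_SInf]
  refine Set.Finite.subset (Set.finite_Iio n) fun i hi => ?_
  simp only [Set.mem_setOf_eq] at hi
  simp only [Set.mem_Iio]
  by_contra h
  push_neg at h
  apply hi
  show sigmaFun n i = i
  unfold sigmaFun
  split_ifs <;> first | contradiction | omega

/-- The cycle of `s` through the point `i` (the paper's `s_p` for the orbit `p` of `i`). -/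
def cycleAt (s : Equiv.Perm ℕ) (i : ℕ) : Equiv.Perm ℕ where
  toFun j := if s.SameCycle i j then s j else j
  invFun j := if s.SameCycle i j then s⁻¹ j else j
  left_inv j := by
    by_cases h : s.SameCycle i j
    · have h2 : s.SameCycle i (s j) := Equiv.Perm.sameCycle_apply_right.mpr h
      simp [h, h2]
    · simp [h]
  right_inv j := by
    by_cases h : s.SameCycle i j
    · have h2 : s.SameCycle i (s⁻¹ j) := Equiv.Perm.sameCycle_symm_apply_right.mpr h
      simp [h, h2]
    · simp [h]

theorem cycleAt_mem {s : Equiv.Perm ℕ} (hs : s ∈ SInf) (i : ℕ) : cycleAt s i ∈ SInf := by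
  rw [mem_SInf] at hs ⊢
  refine Set.Finite.subset hs fun j hj => ?_
  simp only [Set.mem_setOf_eq] at hj ⊢
  intro h
  apply hj
  show (if s.SameCycle i j then s j else j) = j
  split_ifs with hc
  · exact h
  · rfl

/-- The generalized cycle of `g = sγ` corresponding to the orbit of `i` under `s`. -/
def genCycle {Γ : Type*} [Group Γ] (g : WG Γ) (i : ℕ) : WG Γ :=
  permW ⟨cycleAt (g : W Γ).right i, cycleAt_mem g.2.1 i⟩ *
  seqW ⟨fun k => if ((g : W Γ).right).SameCycle i k then (g : W Γ).left ((g : W Γ).right k)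
      else 1, by
    rw [mem_GammaE]
    refine Set.Finite.subset (Set.Finite.preimage ((g : W Γ).right.injective.injOn) g.2.2)
      fun k hk => ?_
    simp only [Set.mem_setOf_eq] at hk
    simp only [Set.mem_preimage, Set.mem_setOf_eq]
    by_cases hsc : ((g : W Γ).right).SameCycle i k
    · rw [if_pos hsc] at hk; exact hk
    · rw [if_neg hsc] at hk; exact absurd rfl hk⟩

/-- The von Neumann algebra `𝔄_j` generated by `O_j` and the `π(γ)` with `γ` supported at `j`. -/
def Aj (π : WG Γ →* (H →L[ℂ] H)) (O : H →L[ℂ] H) (j : ℕ) : Set (H →L[ℂ] H) :=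
  commutant (commutant
    ({O} ∪ {T | ∃ γ : GammaE Γ, (∀ i, i ≠ j → (γ : ℕ → Γ) i = 1) ∧ T = π (seqW γ)}))

/-! For `g, h ∈ G` the coefficient `⟪π h ξ, π (i j) (π g ξ)⟫ = φ (h⁻¹ (i j) g)` does not depend
on `j` once `j` lies beyond the supports of `g` and `h`: conjugating by the transposition `(j k)`
of two such points fixes `g` and `h` and moves `(i j)` to `(i k)`, and `φ` is `𝔖∞`-central.
So the matrix coefficients of the unitary involutions `π (i j)` converge on the cyclic orbit of
`ξ`; being uniformly bounded, they converge on all of `H`, and the limit form is bounded by `1`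
and Hermitian, hence is the form of a self-adjoint contraction `O`. -/

section ConvergenceSubmodule

variable {𝕜 E F : Type*} [NontriviallyNormedField 𝕜] [NormedAddCommGroup E] [NormedSpace 𝕜 E]
  [NormedAddCommGroup F] [NormedSpace 𝕜 F]

def convergenceSubmodule (f : ℕ → E →L[𝕜] F) : Submodule 𝕜 E where
  carrier := {x | ∃ c, Tendsto (fun j => f j x) atTop (𝓝 c)}
  zero_mem' := ⟨0, by simp⟩
  add_mem' := fun ⟨c, hc⟩ ⟨d, hd⟩ => ⟨c + d, by simpa using hc.add hd⟩
  smul_mem' a _ := fun ⟨c, hc⟩ => ⟨a • c, by simpa using hc.const_smul a⟩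

theorem isClosed_convergenceSubmodule [CompleteSpace F] (f : ℕ → E →L[𝕜] F) {C : ℝ}
    (hf : ∀ j, ‖f j‖ ≤ C) : IsClosed (convergenceSubmodule f : Set E) := by
  refine isClosed_of_closure_subset fun x hx => ?_
  refine cauchySeq_tendsto_of_complete (Metric.cauchySeq_iff'.2 fun ε hε => ?_)
  have hC : 0 ≤ C := (norm_nonneg _).trans (hf 0)
  obtain ⟨x', ⟨c, hc⟩, hxx'⟩ :=
    Metric.mem_closure_iff.1 hx (ε / (3 * (C + 1))) (by positivity)
  obtain ⟨N, hN⟩ := Metric.cauchySeq_iff'.1 hc.cauchySeq (ε / 3) (by positivity)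
  have hclose : ∀ j, dist (f j x) (f j x') ≤ ε / 3 := fun j => calc
    dist (f j x) (f j x') ≤ C * dist x x' := by
      simpa only [dist_eq_norm, ← map_sub] using (f j).le_of_opNorm_le (hf j) (x - x')
    _ ≤ (C + 1) * (ε / (3 * (C + 1))) := by gcongr; linarith
    _ = ε / 3 := by field_simp
  refine ⟨N, fun n hn => ?_⟩
  calc dist (f n x) (f N x)
      ≤ dist (f n x) (f n x') + dist (f n x') (f N x') + dist (f N x') (f N x) :=
        dist_triangle4 _ _ _ _
    _ < ε := by linarith [hclose n, hclose N, hN n hn, dist_comm (f N x') (f N x)]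

theorem exists_tendsto_of_dense_span [CompleteSpace F] (f : ℕ → E →L[𝕜] F) {C : ℝ}
    (hf : ∀ j, ‖f j‖ ≤ C) {S : Set E} (hS : Dense (Submodule.span 𝕜 S : Set E))
    (h : ∀ x ∈ S, ∃ c, Tendsto (fun j => f j x) atTop (𝓝 c)) (x : E) :
    ∃ c, Tendsto (fun j => f j x) atTop (𝓝 c) := by
  have hle : (Submodule.span 𝕜 S).topologicalClosure ≤ convergenceSubmodule f :=
    Submodule.topologicalClosure_minimal _ (Submodule.span_le.2 h)
      (isClosed_convergenceSubmodule f hf)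
  rw [Submodule.dense_iff_topologicalClosure_eq_top.1 hS] at hle
  exact hle Submodule.mem_top

end ConvergenceSubmodule

section WeakOperatorLimit

variable {E : Type*} [NormedAddCommGroup E] [InnerProductSpace ℂ E]

theorem tendsto_inner_symm {α : Type*} {l : Filter α} {u v : α → E} {c : ℂ}
    (h : Tendsto (fun a => ⟪u a, v a⟫) l (𝓝 c)) :
    Tendsto (fun a => ⟪v a, u a⟫) l (𝓝 (starRingEnd ℂ c)) := by
  simpa only [Function.comp_def, inner_conj_symm] using
    (Complex.continuous_conj.tendsto c).comp h

theorem exists_tendsto_inner_comm {α : Type*} {l : Filter α} {u v : α → E} :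
    (∃ c, Tendsto (fun a => ⟪u a, v a⟫) l (𝓝 c)) ↔ ∃ c, Tendsto (fun a => ⟪v a, u a⟫) l (𝓝 c) :=
  ⟨fun ⟨_, h⟩ => ⟨_, tendsto_inner_symm h⟩, fun ⟨_, h⟩ => ⟨_, tendsto_inner_symm h⟩⟩

theorem exists_tendsto_inner_of_dense_span (T : ℕ → E →L[ℂ] E) {C : ℝ} (hT : ∀ j, ‖T j‖ ≤ C)
    {S : Set E} (hS : Dense (Submodule.span ℂ S : Set E))
    (h : ∀ x ∈ S, ∀ y ∈ S, ∃ c, Tendsto (fun j => ⟪y, T j x⟫) atTop (𝓝 c)) (x y : E) :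
    ∃ c, Tendsto (fun j => ⟪y, T j x⟫) atTop (𝓝 c) := by
  have hS_left : ∀ y ∈ S, ∃ c, Tendsto (fun j => ⟪y, T j x⟫) atTop (𝓝 c) := fun y hy =>
    exists_tendsto_of_dense_span (fun j => (innerSL ℂ y).comp (T j)) (C := ‖y‖ * C)
      (fun j => (ContinuousLinearMap.opNorm_comp_le _ _).trans (by
        rw [innerSL_apply_norm]; gcongr; exact hT j))
      hS (fun x hx => h x hx y hy) x
  refine exists_tendsto_inner_comm.1 <|
    exists_tendsto_of_dense_span (fun j => innerSL ℂ (T j x)) (C := C * ‖x‖)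
      (fun j => by rw [innerSL_apply_norm]; exact (T j).le_of_opNorm_le (hT j) x) hS
      (fun y hy => exists_tendsto_inner_comm.1 (hS_left y hy)) y

variable [CompleteSpace E]

theorem isSelfAdjoint_of_tendsto_inner {T : ℕ → E →L[ℂ] E} {O : E →L[ℂ] E}
    (hT : ∀ j, IsSelfAdjoint (T j))
    (hO : ∀ x y, Tendsto (fun j => ⟪y, T j x⟫) atTop (𝓝 ⟪y, O x⟫)) : IsSelfAdjoint O := by
  refine ContinuousLinearMap.isSelfAdjoint_iff_isSymmetric.2 fun x y => ?_
  have h := tendsto_inner_symm (hO x y)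
  rw [inner_conj_symm] at h
  exact tendsto_nhds_unique (h.congr fun j => (hT j).isSymmetric x y) (hO y x)

-- Banach–Steinhaus makes the limit functional bounded, and Riesz represents it.
theorem exists_tendsto_inner_of_forall_exists (v : ℕ → E)
    (h : ∀ y, ∃ c, Tendsto (fun j => ⟪y, v j⟫) atTop (𝓝 c)) :
    ∃ w, ∀ y, Tendsto (fun j => ⟪y, v j⟫) atTop (𝓝 ⟪y, w⟫) := by
  choose c hc using fun y => exists_tendsto_inner_comm.1 (h y)
  let L : StrongDual ℂ E :=
    continuousLinearMapOfTendsto (fun j => innerSL ℂ (v j)) (tendsto_pi_nhds.2 hc)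
  refine ⟨(InnerProductSpace.toDual ℂ E).symm L, fun y => ?_⟩
  rw [← inner_conj_symm, InnerProductSpace.toDual_symm_apply]
  exact tendsto_inner_symm (hc y)

theorem exists_clm_tendsto_inner_of_forall_exists (T : ℕ → E →L[ℂ] E) {C : ℝ} (hT : ∀ j, ‖T j‖ ≤ C)
    (h : ∀ x y, ∃ c, Tendsto (fun j => ⟪y, T j x⟫) atTop (𝓝 c)) :
    ∃ O : E →L[ℂ] E, ‖O‖ ≤ C ∧ ∀ x y, Tendsto (fun j => ⟪y, T j x⟫) atTop (𝓝 ⟪y, O x⟫) := by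
  have hC : 0 ≤ C := (norm_nonneg _).trans (hT 0)
  choose w hw using fun x => exists_tendsto_inner_of_forall_exists _ (h x)
  have hadd : ∀ x x', w (x + x') = w x + w x' := fun x x' => ext_inner_left ℂ fun y =>
    tendsto_nhds_unique (hw (x + x') y)
      (by simpa only [map_add, inner_add_right] using (hw x y).add (hw x' y))
  have hsmul : ∀ (a : ℂ) x, w (a • x) = a • w x := fun a x => ext_inner_left ℂ fun y =>
    tendsto_nhds_unique (hw (a • x) y)
      (by simpa only [map_smul, inner_smul_right] using (hw x y).const_mul a)
  have hbound : ∀ x, ‖w x‖ ≤ C * ‖x‖ := fun x => by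
    rw [← (InnerProductSpace.toDual ℂ E).norm_map]
    refine ContinuousLinearMap.opNorm_le_bound _ (by positivity) fun y => ?_
    rw [InnerProductSpace.toDual_apply_apply, norm_inner_symm]
    refine le_of_tendsto' (hw x y).norm fun j => (norm_inner_le_norm _ _).trans ?_
    calc ‖y‖ * ‖T j x‖ ≤ ‖y‖ * (C * ‖x‖) := by gcongr; exact (T j).le_of_opNorm_le (hT j) x
      _ = C * ‖x‖ * ‖y‖ := by ring
  let O : E →ₗ[ℂ] E := { toFun := w, map_add' := hadd, map_smul' := hsmul }
  exact ⟨O.mkContinuous C hbound, LinearMap.mkContinuous_norm_le _ hC _, hw⟩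

end WeakOperatorLimit

theorem isSelfAdjoint_of_mem_unitary_of_mul_self {A : Type*} [Monoid A] [StarMul A] {u : A}
    (hu : u ∈ unitary A) (h : u * u = 1) : IsSelfAdjoint u :=
  calc star u = star u * (u * u) := by rw [h, mul_one]
    _ = u := by rw [← mul_assoc, Unitary.star_mul_self_of_mem hu, one_mul]

theorem permW_mul (s t : SInf) : (permW (s * t) : WG Γ) = permW s * permW t :=
  Subtype.ext (map_mul SemidirectProduct.inr s.1 t.1)

theorem swapW_mul_self (a b : ℕ) : (swapW a b : WG Γ) * swapW a b = 1 := by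
  rw [swapW, ← permW_mul]
  exact Subtype.ext (congrArg SemidirectProduct.inr (Equiv.swap_mul_self a b))

theorem swapW_mul_swapW_mul_inv {i j k : ℕ} (hij : i ≠ j) (hik : i ≠ k) :
    (swapW j k : WG Γ) * swapW i j * (swapW j k)⁻¹ = swapW i k := by
  rw [inv_eq_of_mul_eq_one_right (swapW_mul_self j k), swapW, swapW, swapW, ← permW_mul,
    ← permW_mul]
  exact congrArg permW
    (Subtype.ext ((Equiv.swap_mul_swap_mul_swap hij hik).trans (Equiv.swap_comm k i)))

theorem finite_supp (g : WG Γ) : (supp g).Finite :=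
  (g.2.1.union g.2.2).subset fun _ hn => hn

theorem commute_swapW_of_notMem_supp {g : WG Γ} {j k : ℕ} (hj : j ∉ supp g) (hk : k ∉ supp g) :
    Commute (swapW j k) g := by
  simp only [supp, Set.mem_ofPred_eq, not_or, not_not] at hj hk
  refine Subtype.ext (SemidirectProduct.ext ?_ ?_)
  · show (1 : ℕ → Γ) * permAction Γ (Equiv.swap j k) (g : W Γ).left =
      (g : W Γ).left * permAction Γ (g : W Γ).right 1
    rw [one_mul, map_one, mul_one]
    funext n
    show (g : W Γ).left ((Equiv.swap j k).symm n) = (g : W Γ).left n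
    rw [Equiv.symm_swap, Equiv.swap_apply_def]
    split_ifs with hnj hnk
    · rw [hnj, hj.2, hk.2]
    · rw [hnk, hj.2, hk.2]
    · rfl
  · show Equiv.swap j k * (g : W Γ).right = (g : W Γ).right * Equiv.swap j k
    rw [Equiv.mul_swap_eq_swap_mul, hj.1, hk.1]

theorem IsSCentral.exists_tendsto_mul_swapW_mul {φ : WG Γ → ℂ} (hφ : IsSCentral φ) (g h : WG Γ)
    (i : ℕ) : ∃ c, Tendsto (fun j => φ (g * (swapW i j * h))) atTop (𝓝 c) := by
  obtain ⟨b, hb⟩ := (((finite_supp g).union (finite_supp h)).insert i).bddAbove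
  have hout : ∀ n, b < n → n ∉ supp g ∧ n ∉ supp h ∧ i ≠ n := fun n hn =>
    ⟨fun hm => hn.not_ge (hb (Set.mem_insert_of_mem _ (Set.mem_union_left _ hm))),
      fun hm => hn.not_ge (hb (Set.mem_insert_of_mem _ (Set.mem_union_right _ hm))),
      fun hin => hn.not_ge (hb (hin ▸ Set.mem_insert i _))⟩
  refine ⟨φ (g * (swapW i (b + 1) * h)),
    tendsto_const_nhds.congr' ((eventually_gt_atTop b).mono fun j hj => ?_)⟩
  obtain ⟨hgN, hhN, hiN⟩ := hout (b + 1) (by omega)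
  obtain ⟨hgj, hhj, hij⟩ := hout j hj
  have hsg := commute_swapW_of_notMem_supp hgN hgj
  have hsh := commute_swapW_of_notMem_supp hhN hhj
  rw [← hφ ⟨_, swap_mem_SInf (b + 1) j⟩ (g * (swapW i (b + 1) * h))]
  show φ (swapW (b + 1) j * (g * (swapW i (b + 1) * h)) * (swapW (b + 1) j)⁻¹) =
    φ (g * (swapW i j * h))
  rw [← swapW_mul_swapW_mul_inv hiN hij]
  simp only [mul_assoc]
  rw [hsg.left_comm, ← hsh.inv_left.eq]

theorem star_map_eq_map_inv {G A : Type*} [Group G] [Monoid A] [StarMul A] (ρ : G →* A) {g : G}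
    (hg : ρ g ∈ unitary A) : star (ρ g) = ρ g⁻¹ :=
  calc star (ρ g) = star (ρ g) * (ρ g * ρ g⁻¹) := by
        rw [← map_mul, mul_inv_cancel, map_one, mul_one]
    _ = ρ g⁻¹ := by rw [← mul_assoc, Unitary.star_mul_self_of_mem hg, one_mul]

theorem IsGNS.inner_map_map {φ : WG Γ → ℂ} {π : WG Γ →* (H →L[ℂ] H)} {ξ : H}
    (hGNS : IsGNS φ π ξ) (g h : WG Γ) : ⟪π g ξ, π h ξ⟫ = φ (g⁻¹ * h) := by
  rw [hGNS.inner_eq, map_mul, ← star_map_eq_map_inv π (hGNS.unitary g),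
    ContinuousLinearMap.star_eq_adjoint]
  exact (ContinuousLinearMap.adjoint_inner_right _ _ _).symm

theorem statement_9_general {Γ : Type*} [Group Γ] {H : Type*} [NormedAddCommGroup H]
    [InnerProductSpace ℂ H] [CompleteSpace H]
    (φ : WG Γ → ℂ) (hcentral : IsSCentral φ)
    (π : WG Γ →* (H →L[ℂ] H)) (ξ : H) (hGNS : IsGNS φ π ξ)
    (i : ℕ) :
    ∃ O : H →L[ℂ] H, IsSelfAdjoint O ∧ ‖O‖ ≤ 1 ∧
      ∀ x y : H, Tendsto (fun j => ⟪y, π (swapW i j) x⟫) atTop (𝓝 ⟪y, O x⟫) := by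
  set T : ℕ → H →L[ℂ] H := fun j => π (swapW i j)
  have hT_sa : ∀ j, IsSelfAdjoint (T j) := fun j =>
    isSelfAdjoint_of_mem_unitary_of_mul_self (hGNS.unitary _)
      (by rw [← map_mul, swapW_mul_self, map_one])
  have hT_norm : ∀ j, ‖T j‖ ≤ 1 := fun j =>
    ContinuousLinearMap.opNorm_le_bound _ zero_le_one fun x => by
      rw [ContinuousLinearMap.norm_map_of_mem_unitary (hGNS.unitary _), one_mul]
  have hT_orbit : ∀ x ∈ Set.range (fun g => π g ξ), ∀ y ∈ Set.range (fun g => π g ξ),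
      ∃ c, Tendsto (fun j => ⟪y, T j x⟫) atTop (𝓝 c) := by
    rintro _ ⟨g, rfl⟩ _ ⟨h, rfl⟩
    have hφ : ∀ j, ⟪π h ξ, T j (π g ξ)⟫ = φ (h⁻¹ * (swapW i j * g)) := fun j => by
      rw [← hGNS.inner_map_map, map_mul]
      rfl
    simpa only [hφ] using hcentral.exists_tendsto_mul_swapW_mul h⁻¹ g i
  obtain ⟨O, hO_norm, hO⟩ := exists_clm_tendsto_inner_of_forall_exists T hT_norm
    (exists_tendsto_inner_of_dense_span T hT_norm hGNS.cyclic hT_orbit)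
  exact ⟨O, isSelfAdjoint_of_tendsto_inner hT_sa hO, hO_norm, hO⟩

theorem statement_9 {Γ : Type*} [Group Γ] {H : Type*} [NormedAddCommGroup H]
    [InnerProductSpace ℂ H] [CompleteSpace H]
    (φ : WG Γ → ℂ) (hstate : IsState φ) (hcentral : IsSCentral φ)
    (π : WG Γ →* (H →L[ℂ] H)) (ξ : H) (hGNS : IsGNS φ π ξ)
    (i : ℕ) :
    ∃ O : H →L[ℂ] H, IsSelfAdjoint O ∧ ‖O‖ ≤ 1 ∧
      ∀ x y : H, Tendsto (fun j => ⟪y, π (swapW i j) x⟫) atTop (𝓝 ⟪y, O x⟫) :=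
  statement_9_general φ hcentral π ξ hGNS i

end DN
end
end

section
/- Let φ be an 𝔖∞-central state on G = Γ≀𝔖∞ with GNS triple (π, H, ξ), and let O_k be the asymptotic transpositions. Fix n ∈ ℕ and let g, h ∈ G^{(n)}, i.e. writing g = sγ one has s(n) = n and γ_n = e, and similarly for h. Then for every k ∈ ℕ with k ≠ n: ⟨π(g·(n k)·h)ξ, ξ⟩ = ⟨π(g)·O_k·π(h)ξ, ξ⟩, where (n k) ∈ 𝔖∞ is the transposition of n and k. -/
open scoped Classical ComplexOrder
open Filter Topology

noncomputable section

namespace DN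

local notation "⟪" x ", " y "⟫" => @inner ℂ _ _ x y

variable {Γ : Type*} [Group Γ]
variable {H : Type*} [NormedAddCommGroup H] [InnerProductSpace ℂ H] [CompleteSpace H]

/-! For `j` outside the supports of `g` and `h` and different from `n` and `k`, conjugating by
`(n j)` fixes `g` and `h` and turns `(k j)` into `(n k)`. By `𝔖∞`-centrality the sequence
`φ (g (k j) h)` is therefore eventually equal to `φ (g (n k) h)`, while by definition of `O_k` it
converges to `⟪π g⁻¹ ξ, O_k π h ξ⟫`. -/

theorem inner_apply_eq_inner_inv_apply {G : Type*} [Group G] {π : G →* (H →L[ℂ] H)}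
    (hπ : ∀ g, π g ∈ unitary (H →L[ℂ] H)) (g : G) (x y : H) :
    ⟪x, π g y⟫ = ⟪π g⁻¹ x, y⟫ := by
  rw [← ContinuousLinearMap.inner_map_map_of_mem_unitary (hπ g⁻¹) x, ← mul_apply_eq_comp,
    ← map_mul, inv_mul_cancel, map_one, one_apply_eq_self]

theorem coe_permW (s : SInf) : ((permW s : WG Γ) : W Γ) = SemidirectProduct.inr s.1 := rfl

theorem permW_conj_eq_self {s : SInf} {a : WG Γ} (hright : Commute s.1 (a : W Γ).right)
    (hleft : ∀ i, (a : W Γ).left (s.1 i) = (a : W Γ).left i) :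
    permW s * a * (permW s)⁻¹ = a := by
  apply Subtype.ext
  simp only [Subgroup.coe_mul, Subgroup.coe_inv, coe_permW, ← map_inv]
  ext i
  · show (1 * permAction Γ s.1 (a : W Γ).left * permAction Γ (s.1 * (a : W Γ).right) 1) i = _
    simpa [permAction, permMulAut] using (hleft (s.1.symm i)).symm
  · simp [hright.eq]

theorem swapW_conj_eq_self {a : WG Γ} {i j : ℕ} (hi : (a : W Γ).right i = i)
    (hj : (a : W Γ).right j = j) (hleft : (a : W Γ).left i = (a : W Γ).left j) :
    swapW i j * a * (swapW i j)⁻¹ = a := by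
  refine permW_conj_eq_self ?_ fun l => ?_
  · rw [Commute, SemiconjBy, eq_comm, ← mul_inv_eq_iff_eq_mul, ← Equiv.swap_apply_apply, hi, hj]
  · rw [Equiv.swap_apply_def]
    split_ifs <;> simp_all

theorem swapW_conj_swapW {i j k : ℕ} (hki : k ≠ i) (hkj : k ≠ j) :
    swapW i j * swapW k j * (swapW i j)⁻¹ = (swapW i k : WG Γ) := by
  apply Subtype.ext
  simp only [swapW, Subgroup.coe_mul, Subgroup.coe_inv, coe_permW, ← map_inv, ← map_mul,
    ← Equiv.swap_apply_apply, Equiv.swap_apply_of_ne_of_ne hki hkj, Equiv.swap_apply_right,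
    Equiv.swap_comm k i]

theorem eventually_right_eq_and_left_eq_one (a : WG Γ) :
    ∀ᶠ j in atTop, (a : W Γ).right j = j ∧ (a : W Γ).left j = 1 := by
  rw [← Nat.cofinite_eq_atTop]
  filter_upwards [(a.2.1.union a.2.2).eventually_cofinite_notMem] with j hj
  simpa [not_or] using hj

theorem IsSCentral.eventually_apply_mul_swapW_mul {φ : WG Γ → ℂ} (hφ : IsSCentral φ) {n k : ℕ}
    {g h : WG Γ} (hg : (g : W Γ).right n = n ∧ (g : W Γ).left n = 1)
    (hh : (h : W Γ).right n = n ∧ (h : W Γ).left n = 1) (hk : k ≠ n) :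
    ∀ᶠ j in atTop, φ (g * swapW k j * h) = φ (g * swapW n k * h) := by
  filter_upwards [eventually_right_eq_and_left_eq_one g, eventually_right_eq_and_left_eq_one h,
    eventually_ne_atTop k] with j ⟨hgr, hgl⟩ ⟨hhr, hhl⟩ hjk
  set c : WG Γ := swapW n j
  rw [← hφ ⟨_, swap_mem_SInf n j⟩]
  calc φ (c * (g * swapW k j * h) * c⁻¹)
      = φ ((c * g * c⁻¹) * (c * swapW k j * c⁻¹) * (c * h * c⁻¹)) := by group
    _ = φ (g * swapW n k * h) := by
      rw [swapW_conj_eq_self hg.1 hgr (hg.2.trans hgl.symm), swapW_conj_swapW hk hjk.symm,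
        swapW_conj_eq_self hh.1 hhr (hh.2.trans hhl.symm)]

theorem statement_10_general {Γ : Type*} [Group Γ] {H : Type*} [NormedAddCommGroup H]
    [InnerProductSpace ℂ H] [CompleteSpace H]
    (φ : WG Γ → ℂ) (hcentral : IsSCentral φ)
    (π : WG Γ →* (H →L[ℂ] H)) (ξ : H) (hGNS : IsGNS φ π ξ)
    (O : ℕ → (H →L[ℂ] H))
    (hO : ∀ (i : ℕ) (x y : H),
      Tendsto (fun j => ⟪y, π (swapW i j) x⟫) atTop (𝓝 ⟪y, O i x⟫))
    (n : ℕ) (g h : WG Γ)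
    (hg : (g : W Γ).right n = n ∧ (g : W Γ).left n = 1)
    (hh : (h : W Γ).right n = n ∧ (h : W Γ).left n = 1)
    (k : ℕ) (hk : k ≠ n) :
    ⟪ξ, π (g * swapW n k * h) ξ⟫ = ⟪ξ, π g (O k (π h ξ))⟫ := by
  have hlim : Tendsto (fun j => φ (g * swapW k j * h)) atTop (𝓝 ⟪π g⁻¹ ξ, O k (π h ξ)⟫) :=
    (hO k (π h ξ) (π g⁻¹ ξ)).congr fun j => by
      rw [hGNS.inner_eq, map_mul, map_mul, mul_apply_eq_comp, mul_apply_eq_comp,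
        inner_apply_eq_inner_inv_apply hGNS.unitary g]
  have hconst : Tendsto (fun j => φ (g * swapW k j * h)) atTop (𝓝 (φ (g * swapW n k * h))) :=
    tendsto_const_nhds.congr' <|
      (hcentral.eventually_apply_mul_swapW_mul hg hh hk).mono fun _ hj => hj.symm
  rw [← hGNS.inner_eq, tendsto_nhds_unique hconst hlim,
    inner_apply_eq_inner_inv_apply hGNS.unitary]

theorem statement_10 {Γ : Type*} [Group Γ] {H : Type*} [NormedAddCommGroup H]
    [InnerProductSpace ℂ H] [CompleteSpace H]
    (φ : WG Γ → ℂ) (hstate : IsState φ) (hcentral : IsSCentral φ)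
    (π : WG Γ →* (H →L[ℂ] H)) (ξ : H) (hGNS : IsGNS φ π ξ)
    (O : ℕ → (H →L[ℂ] H)) (hOsa : ∀ i, IsSelfAdjoint (O i))
    (hO : ∀ (i : ℕ) (x y : H),
      Tendsto (fun j => ⟪y, π (swapW i j) x⟫) atTop (𝓝 ⟪y, O i x⟫))
    (n : ℕ) (g h : WG Γ)
    (hg : (g : W Γ).right n = n ∧ (g : W Γ).left n = 1)
    (hh : (h : W Γ).right n = n ∧ (h : W Γ).left n = 1)
    (k : ℕ) (hk : k ≠ n) :
    ⟪ξ, π (g * swapW n k * h) ξ⟫ = ⟪ξ, π g (O k (π h ξ))⟫ :=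
  statement_10_general φ hcentral π ξ hGNS O hO n g h hg hh k hk

end DN
end
end

section
/- Let φ be an 𝔖∞-central state on G = Γ≀𝔖∞ with GNS triple (π, H, ξ), and let O_k (k ∈ ℕ) be the asymptotic transpositions. Then: (1) O_k·O_n = O_n·O_k for all k, n ∈ ℕ; (2) O_k·π(γ) = π(γ)·O_k for every γ = (γ₁,γ₂,...) ∈ Γ^∞_e with γ_k = e; (3) π(s)·O_k = O_{s(k)}·π(s) for every s ∈ 𝔖∞ and every k ∈ ℕ. -/
open scoped Classical ComplexOrder
open Filter Topology

noncomputable section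

namespace DN

local notation "⟪" x ", " y "⟫" => @inner ℂ _ _ x y

variable {Γ : Type*} [Group Γ]
variable {H : Type*} [NormedAddCommGroup H] [InnerProductSpace ℂ H] [CompleteSpace H]

/-!
Each relation is the weak-operator limit, as `j → ∞`, of a relation in `G` that holds as soon as
`j` lies outside a finite set: `s (k j) s⁻¹ = (s(k) j)` once `s j = j`; `(k j)` commutes with `γ`
once `γ j = 1 = γ k`; and `π((k j))` commutes with `O_n` by (3) once `j ≠ n`.
Multiplication by a fixed bounded operator is continuous for the weak operator topology, which is
Hausdorff, so the limits of the two sides agree.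
-/

theorem eventually_apply_eq_self_of_mem_SInf {s : Equiv.Perm ℕ} (hs : s ∈ SInf) :
    ∀ᶠ j in atTop, s j = j := by
  rw [← Nat.cofinite_eq_atTop]
  simpa using hs.eventually_cofinite_notMem

theorem eventually_eq_one_of_mem_GammaE {γ : ℕ → Γ} (hγ : γ ∈ GammaE Γ) :
    ∀ᶠ j in atTop, γ j = 1 := by
  rw [← Nat.cofinite_eq_atTop]
  simpa using hγ.eventually_cofinite_notMem

theorem permW_mul_swapW (s : SInf) (a b : ℕ) :
    (permW s : WG Γ) * swapW a b = swapW (s.1 a) (s.1 b) * permW s := by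
  apply Subtype.ext
  change SemidirectProduct.inr s.1 * SemidirectProduct.inr (Equiv.swap a b) =
    (SemidirectProduct.inr (Equiv.swap (s.1 a) (s.1 b)) * SemidirectProduct.inr s.1 : W Γ)
  rw [← map_mul, ← map_mul, Equiv.swap_apply_apply, inv_mul_cancel_right]

theorem commute_swapW_seqW {γ : GammaE Γ} {a b : ℕ} (hab : (γ : ℕ → Γ) a = (γ : ℕ → Γ) b) :
    Commute (swapW a b) (seqW γ) := by
  have hfix : permAction Γ (Equiv.swap a b) γ.1 = γ.1 := by
    funext i
    change γ.1 (Equiv.swap a b i) = γ.1 i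
    rcases eq_or_ne i a with rfl | hia
    · rw [Equiv.swap_apply_left, hab]
    rcases eq_or_ne i b with rfl | hib
    · rw [Equiv.swap_apply_right, hab]
    · rw [Equiv.swap_apply_of_ne_of_ne hia hib]
  apply Subtype.ext
  change (SemidirectProduct.inr (Equiv.swap a b) * SemidirectProduct.inl γ.1 : W Γ) =
    SemidirectProduct.inl γ.1 * SemidirectProduct.inr (Equiv.swap a b)
  ext <;> simp [hfix]

section AsymptoticTransposition

open ContinuousLinearMapWOT

variable {𝕜 E : Type*} [RCLike 𝕜] [NormedAddCommGroup E] [NormedSpace 𝕜 E]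

theorem mul_eq_mul_of_tendsto_wot {α : Type*} {l : Filter α} [l.NeBot] {f g : α → E →L[𝕜] E}
    {A B S T : E →L[𝕜] E} (hf : Tendsto (fun a => ofCLM (f a)) l (𝓝 (ofCLM A)))
    (hg : Tendsto (fun a => ofCLM (g a)) l (𝓝 (ofCLM B)))
    (h : ∀ᶠ a in l, S * f a = g a * T) : S * A = B * T := by
  have hSf : Tendsto (fun a => ofCLM S * ofCLM (f a)) l (𝓝 (ofCLM S * ofCLM A)) :=
    ((continuous_postcomp (ofCLM S)).tendsto _).comp hf
  have hgT : Tendsto (fun a => ofCLM (g a) * ofCLM T) l (𝓝 (ofCLM B * ofCLM T)) :=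
    ((continuous_precomp (ofCLM T)).tendsto _).comp hg
  refine ofCLM_injective ?_
  rw [ofCLM_mul, ofCLM_mul]
  refine tendsto_nhds_unique (hSf.congr' ?_) hgT
  filter_upwards [h] with a ha
  rw [← ofCLM_mul, ← ofCLM_mul, ha]

def IsAsymptoticTransposition (π : WG Γ →* (E →L[𝕜] E)) (i : ℕ) (A : E →L[𝕜] E) : Prop :=
  Tendsto (fun j => ofCLM (π (swapW i j))) atTop (𝓝 (ofCLM A))

theorem isAsymptoticTransposition_iff_inner {F : Type*} [NormedAddCommGroup F]
    [InnerProductSpace 𝕜 F] [CompleteSpace F] (π : WG Γ →* (F →L[𝕜] F)) (i : ℕ)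
    (A : F →L[𝕜] F) :
    IsAsymptoticTransposition π i A ↔
      ∀ x y : F, Tendsto (fun j => inner 𝕜 y (π (swapW i j) x)) atTop (𝓝 (inner 𝕜 y (A x))) :=
  tendsto_iff_forall_inner_apply_tendsto

variable {π : WG Γ →* (E →L[𝕜] E)} {O : ℕ → E →L[𝕜] E}

theorem IsAsymptoticTransposition.map_permW_mul (hO : ∀ i, IsAsymptoticTransposition π i (O i))
    (s : SInf) (k : ℕ) : π (permW s) * O k = O (s.1 k) * π (permW s) :=
  mul_eq_mul_of_tendsto_wot (hO k) (hO (s.1 k)) <|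
    (eventually_apply_eq_self_of_mem_SInf s.2).mono fun j hj => by
      rw [← map_mul, ← map_mul, permW_mul_swapW, hj]

theorem IsAsymptoticTransposition.commute_map_seqW {k : ℕ} {A : E →L[𝕜] E}
    (hA : IsAsymptoticTransposition π k A) {γ : GammaE Γ} (hγ : (γ : ℕ → Γ) k = 1) :
    Commute A (π (seqW γ)) :=
  (mul_eq_mul_of_tendsto_wot hA hA <|
    (eventually_eq_one_of_mem_GammaE γ.2).mono fun j hj => by
      rw [← map_mul, ← map_mul, (commute_swapW_seqW (hγ.trans hj.symm)).eq]).symm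

theorem IsAsymptoticTransposition.commute (hO : ∀ i, IsAsymptoticTransposition π i (O i))
    (k n : ℕ) : Commute (O k) (O n) := by
  rcases eq_or_ne k n with rfl | hkn
  · exact Commute.refl _
  refine (mul_eq_mul_of_tendsto_wot (hO k) (hO k) ?_).symm
  filter_upwards [eventually_ne_atTop n] with j hjn
  have h : π (swapW k j) * O n = O (Equiv.swap k j n) * π (swapW k j) :=
    IsAsymptoticTransposition.map_permW_mul hO ⟨_, swap_mem_SInf k j⟩ n
  rw [Equiv.swap_apply_of_ne_of_ne hkn.symm hjn.symm] at h
  exact h.symm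

end AsymptoticTransposition

theorem statement_11_general {Γ : Type*} [Group Γ] {H : Type*} [NormedAddCommGroup H]
    [InnerProductSpace ℂ H] [CompleteSpace H]
    (π : WG Γ →* (H →L[ℂ] H))
    (O : ℕ → (H →L[ℂ] H))
    (hO : ∀ (i : ℕ) (x y : H),
      Tendsto (fun j => ⟪y, π (swapW i j) x⟫) atTop (𝓝 ⟪y, O i x⟫)) :
    (∀ k n : ℕ, O k * O n = O n * O k) ∧
    (∀ (k : ℕ) (γ : GammaE Γ), (γ : ℕ → Γ) k = 1 →
      O k * π (seqW γ) = π (seqW γ) * O k) ∧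
    (∀ (s : SInf) (k : ℕ),
      π (permW s) * O k = O ((s : Equiv.Perm ℕ) k) * π (permW s)) := by
  have hO' : ∀ i, IsAsymptoticTransposition π i (O i) := fun i =>
    (isAsymptoticTransposition_iff_inner π i (O i)).2 (hO i)
  exact ⟨fun k n => (IsAsymptoticTransposition.commute hO' k n).eq,
    fun k _ hγ => ((hO' k).commute_map_seqW hγ).eq,
    IsAsymptoticTransposition.map_permW_mul hO'⟩

theorem statement_11 {Γ : Type*} [Group Γ] {H : Type*} [NormedAddCommGroup H]
    [InnerProductSpace ℂ H] [CompleteSpace H]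
    (φ : WG Γ → ℂ) (hstate : IsState φ) (hcentral : IsSCentral φ)
    (π : WG Γ →* (H →L[ℂ] H)) (ξ : H) (hGNS : IsGNS φ π ξ)
    (O : ℕ → (H →L[ℂ] H)) (hOsa : ∀ i, IsSelfAdjoint (O i))
    (hO : ∀ (i : ℕ) (x y : H),
      Tendsto (fun j => ⟪y, π (swapW i j) x⟫) atTop (𝓝 ⟪y, O i x⟫)) :
    (∀ k n : ℕ, O k * O n = O n * O k) ∧
    (∀ (k : ℕ) (γ : GammaE Γ), (γ : ℕ → Γ) k = 1 →
      O k * π (seqW γ) = π (seqW γ) * O k) ∧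
    (∀ (s : SInf) (k : ℕ),
      π (permW s) * O k = O ((s : Equiv.Perm ℕ) k) * π (permW s)) :=
  statement_11_general π O hO

end DN
end
end

section
/- Let φ be an indecomposable 𝔖∞-central state on G = Γ≀𝔖∞ with GNS triple (π, H, ξ), let O_j be the asymptotic transposition, 𝔄_j as defined, P₀^{(j)} the orthogonal projection of H onto ker O_j, and P_±^{(j)} = I − P₀^{(j)}. Then ξ is separating for the algebra P_±^{(j)}·𝔄_j·P_±^{(j)}: if V ∈ 𝔄_j satisfies V = P_±^{(j)}·V·P_±^{(j)} and Vξ = 0, then V = 0. -/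
open scoped Classical ComplexOrder
open Filter Topology

noncomputable section

namespace DN

local notation "⟪" x ", " y "⟫" => @inner ℂ _ _ x y

variable {Γ : Type*} [Group Γ]
variable {H : Type*} [NormedAddCommGroup H] [InnerProductSpace ℂ H] [CompleteSpace H]

/-!
Put `A = V⋆V ∈ 𝔄_j` and `A_k = π((j k)) A π((j k))`. Since `A` commutes with every `π(g)` whose
support avoids `j`, and conjugating by `(j k)` moves such a support off `j` once `k ∉ supp g`,
any weak operator limit `T` of the `A_k` along an ultrafilter finer than `atTop` commutes with
`π(G)`; it also lies in `π(G)''`, so by factoriality `T = c`. By `𝔖∞`-centrality the right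
translation `π(g)ξ ↦ π(g s)ξ` is a bounded operator in `π(G)'`, hence commutes with `V`, and
`Vξ = 0` gives `V π((j k))ξ = 0`, i.e. `A_k ξ = 0` and `c = 0`. Then `‖V π((j k)) x‖² = ⟪x, A_k x⟫`
tends to `0` for every `x`, and since `π((j k)) → O_j` weakly, `V O_j = 0`. Thus `V` vanishes on
the closure of the range of `O_j`, which is `(ker O_j)ᗮ = range P_±`, and `V = P_± V P_± = 0`.
-/

theorem Commute.conj_of_mul_self_eq_one {M : Type*} [Monoid M] {u a b : M} (hu : u * u = 1)
    (h : Commute a b) : Commute (u * a * u) (u * b * u) := by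
  have hu' : ∀ z, u * (u * z) = z := fun z => by rw [← mul_assoc, hu, one_mul]
  simp only [Commute, SemiconjBy, mul_assoc, hu']
  rw [← mul_assoc a, h.eq, mul_assoc]

section Hilbert

variable {𝕜 E : Type*} [RCLike 𝕜] [NormedAddCommGroup E] [InnerProductSpace 𝕜 E]

/-- Weak operator convergence through matrix coefficients, in the shape of the hypothesis on `O`
(cf. `ContinuousLinearMapWOT.tendsto_iff_forall_inner_apply_tendsto`). -/
def WeakOpTendsto {ι : Type*} (A : ι → E →L[𝕜] E) (l : Filter ι) (T : E →L[𝕜] E) : Prop :=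
  ∀ x y, Tendsto (fun k => inner 𝕜 y (A k x)) l (𝓝 (inner 𝕜 y (T x)))

variable {ι : Type*} {l : Filter ι} {A : ι → E →L[𝕜] E} {T : E →L[𝕜] E}

theorem WeakOpTendsto.apply_eq_zero [l.NeBot] (hT : WeakOpTendsto A l T) {x : E}
    (hA : ∀ k, A k x = 0) : T x = 0 :=
  ext_inner_left 𝕜 fun y => by
    rw [inner_zero_right]
    exact tendsto_nhds_unique (hT x y)
      (by simpa only [hA, inner_zero_right] using tendsto_const_nhds)

variable [CompleteSpace E]

theorem exists_weakOpTendsto_of_norm_le (U : Ultrafilter ι) {C : ℝ}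
    (hA : ∀ k, ‖A k‖ ≤ C) : ∃ T, WeakOpTendsto A U T := by
  have hbound : ∀ k y x, ‖inner 𝕜 y (A k x)‖ ≤ C * ‖y‖ * ‖x‖ := fun k y x =>
    calc ‖inner 𝕜 y (A k x)‖ ≤ ‖y‖ * ‖A k x‖ := norm_inner_le_norm _ _
      _ ≤ ‖y‖ * (C * ‖x‖) := by gcongr; exact (A k).le_of_opNorm_le (hA k) x
      _ = C * ‖y‖ * ‖x‖ := by ring
  have hlim : ∀ y x, ∃ z, Tendsto (fun k => inner 𝕜 y (A k x)) U (𝓝 z) := fun y x => by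
    obtain ⟨z, -, hz⟩ := (isCompact_closedBall (0 : 𝕜) (C * ‖y‖ * ‖x‖)).ultrafilter_le_nhds
      (U.map fun k => inner 𝕜 y (A k x)) <| le_principal_iff.mpr <| Ultrafilter.mem_map.mpr <|
        univ_mem' fun k => mem_closedBall_zero_iff.mpr (hbound k y x)
    exact ⟨z, hz⟩
  choose F hF using hlim
  have hF_eq : ∀ y x z, Tendsto (fun k => inner 𝕜 y (A k x)) U (𝓝 z) → F y x = z :=
    fun y x z h => tendsto_nhds_unique (hF y x) h
  let B : E →L⋆[𝕜] E →L[𝕜] 𝕜 := LinearMap.mkContinuous₂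
    (LinearMap.mk₂'ₛₗ (starRingEnd 𝕜) (RingHom.id 𝕜) F
      (fun y₁ y₂ x => hF_eq _ _ _ <| ((hF y₁ x).add (hF y₂ x)).congr fun k =>
        (inner_add_left _ _ _).symm)
      (fun c y x => hF_eq _ _ _ <| ((hF y x).const_mul _).congr fun k =>
        (inner_smul_left _ _ _).symm)
      (fun y x₁ x₂ => hF_eq _ _ _ <| ((hF y x₁).add (hF y x₂)).congr fun k => by
        rw [map_add, inner_add_right])
      (fun c y x => hF_eq _ _ _ <| ((hF y x).const_mul c).congr fun k => by
        rw [map_smul, inner_smul_right]))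
    C fun y x => le_of_tendsto (hF y x).norm (Eventually.of_forall fun k => hbound k y x)
  refine ⟨ContinuousLinearMap.adjoint (InnerProductSpace.continuousLinearMapOfBilin B),
    fun x y => ?_⟩
  rw [ContinuousLinearMap.adjoint_inner_right,
    InnerProductSpace.continuousLinearMapOfBilin_apply]
  exact hF y x

theorem WeakOpTendsto.mul_comm_of_eventually [l.NeBot] (hT : WeakOpTendsto A l T)
    {B : E →L[𝕜] E} (hB : ∀ᶠ k in l, A k * B = B * A k) : T * B = B * T := by
  ext x
  refine ext_inner_left 𝕜 fun y => ?_
  have hlim : Tendsto (fun k => inner 𝕜 y (A k (B x))) l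
      (𝓝 (inner 𝕜 (ContinuousLinearMap.adjoint B y) (T x))) := by
    refine (hT x _).congr' ?_
    filter_upwards [hB] with k hk
    rw [ContinuousLinearMap.adjoint_inner_left]
    exact congrArg (fun S : E →L[𝕜] E => inner 𝕜 y (S x)) hk.symm
  change inner 𝕜 y (T (B x)) = inner 𝕜 y (B (T x))
  rw [tendsto_nhds_unique (hT (B x) y) hlim, ContinuousLinearMap.adjoint_inner_left]

theorem WeakOpTendsto.tendsto_norm_apply {V : E →L[𝕜] E} (hA : ∀ k, IsSelfAdjoint (A k))
    (hT : WeakOpTendsto (fun k => A k * (star V * V) * A k) l 0) (x : E) :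
    Tendsto (fun k => ‖V (A k x)‖) l (𝓝 0) := by
  have hnorm : ∀ k, ‖inner 𝕜 x ((A k * (star V * V) * A k) x)‖ = ‖V (A k x)‖ ^ 2 := fun k => by
    change ‖inner 𝕜 x (A k (star V (V (A k x))))‖ = _
    rw [← ContinuousLinearMap.adjoint_inner_left, (hA k).adjoint_eq,
      ContinuousLinearMap.star_eq_adjoint, ContinuousLinearMap.adjoint_inner_right,
      inner_self_eq_norm_sq_to_K, norm_pow, RCLike.norm_ofReal, abs_norm]
  have hsq : Tendsto (fun k => ‖V (A k x)‖ ^ 2) l (𝓝 0) := by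
    simpa only [hnorm, zero_apply, inner_zero_right, norm_zero] using (hT x x).norm
  simpa using hsq.sqrt

theorem WeakOpTendsto.mul_eq_zero [l.NeBot] (hT : WeakOpTendsto A l T) {V : E →L[𝕜] E}
    (hV : ∀ x, Tendsto (fun k => ‖V (A k x)‖) l (𝓝 0)) : V * T = 0 := by
  ext x
  set w := V (T x)
  have hlim : Tendsto (fun k => inner 𝕜 (ContinuousLinearMap.adjoint V w) (A k x)) l (𝓝 0) := by
    refine squeeze_zero_norm (fun k => ?_) (by simpa using (hV x).const_mul ‖w‖)
    rw [ContinuousLinearMap.adjoint_inner_left]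
    exact norm_inner_le_norm _ _
  have hw : inner 𝕜 w w = 0 := by
    rw [← tendsto_nhds_unique (hT x _) hlim, ContinuousLinearMap.adjoint_inner_left]
  exact inner_self_eq_zero.mp hw

theorem exists_continuousLinearMap_apply_eq_of_inner_eq {v w : ι → E}
    (hv : Dense (Submodule.span 𝕜 (Set.range v) : Set E))
    (h : ∀ a b, inner 𝕜 (w a) (w b) = inner 𝕜 (v a) (v b)) :
    ∃ R : E →L[𝕜] E, ∀ i, R (v i) = w i := by
  let L := Finsupp.linearCombination 𝕜 v
  let Lw := Finsupp.linearCombination 𝕜 w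
  have hinner : ∀ c d, inner 𝕜 (Lw c) (Lw d) = inner 𝕜 (L c) (L d) := fun c d => by
    simp [L, Lw, Finsupp.linearCombination_apply, Finsupp.sum, sum_inner, inner_sum,
      inner_smul_left, inner_smul_right, h]
  have hnorm : ∀ c, ‖Lw c‖ ≤ 1 * ‖L c‖ := fun c => by
    rw [one_mul, norm_eq_sqrt_re_inner (𝕜 := 𝕜), norm_eq_sqrt_re_inner (𝕜 := 𝕜), hinner]
  have hdense : DenseRange L := by
    rw [DenseRange, ← LinearMap.coe_range, Finsupp.range_linearCombination]
    exact hv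
  refine ⟨Lw.extendOfNorm L, fun i => ?_⟩
  simpa [L, Lw] using LinearMap.extendOfNorm_eq hdense ⟨1, hnorm⟩ (Finsupp.single i 1)

theorem apply_eq_zero_of_mem_orthogonal_ker {O V : E →L[𝕜] E} (hO : IsSelfAdjoint O)
    (hVO : V * O = 0) {z : E} (hz : z ∈ (LinearMap.ker (O : E →ₗ[𝕜] E))ᗮ) : V z = 0 := by
  rw [← hO.adjoint_eq, ← ContinuousLinearMap.orthogonal_range,
    Submodule.orthogonal_orthogonal_eq_closure] at hz
  refine Submodule.topologicalClosure_minimal _ ?_ V.isClosed_ker hz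
  rintro _ ⟨x, rfl⟩
  exact congrArg (fun S : E →L[𝕜] E => S x) hVO

theorem mul_one_sub_eq_zero_of_mul_eq_zero {O P V : E →L[𝕜] E} (hO : IsSelfAdjoint O)
    (hP : IsSelfAdjoint P) (hPP : P * P = P)
    (hrange : LinearMap.range (P : E →ₗ[𝕜] E) = LinearMap.ker (O : E →ₗ[𝕜] E))
    (hVO : V * O = 0) : V * (1 - P) = 0 := by
  have hPQ : P * (1 - P) = 0 := by rw [mul_sub, mul_one, hPP, sub_self]
  ext x
  refine apply_eq_zero_of_mem_orthogonal_ker hO hVO ?_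
  rw [← hrange, ContinuousLinearMap.orthogonal_range, hP.adjoint_eq]
  exact congrArg (fun S : E →L[𝕜] E => S x) hPQ

end Hilbert

section Wreath

open SemidirectProduct

@[simp]
theorem permAction_apply (s : Equiv.Perm ℕ) (γ : ℕ → Γ) (i : ℕ) :
    permAction Γ s γ i = γ (s.symm i) := rfl

theorem commute_inl_inl {γ δ : ℕ → Γ} (h : ∀ i, γ i = 1 ∨ δ i = 1) :
    Commute (inl γ : W Γ) (inl δ) :=
  (show Commute γ δ from funext fun i => by rcases h i with h | h <;> simp [h]).map inl

theorem commute_inl_inr {γ : ℕ → Γ} {t : Equiv.Perm ℕ} (h : ∀ i, γ i = 1 ∨ t i = i) :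
    Commute (inl γ : W Γ) (inr t) := by
  have hγ : permAction Γ t γ = γ := funext fun i => by
    by_cases hi : t.symm i = i
    · simp [hi]
    · have hti : t i ≠ i := fun hti => hi (t.symm_apply_eq.mpr hti.symm)
      have hmoved : t (t.symm i) ≠ t.symm i := by simpa using Ne.symm hi
      simp [(h _).resolve_right hmoved, (h i).resolve_right hti]
  have hconj := inl_aut (φ := permAction Γ) t γ
  rw [hγ, map_inv] at hconj
  exact eq_mul_inv_iff_mul_eq.mp hconj

theorem commute_of_disjoint_support {x y : W Γ}
    (h : ∀ i, (x.right i = i ∧ x.left i = 1) ∨ (y.right i = i ∧ y.left i = 1)) :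
    Commute x y := by
  have hright : x.right.Disjoint y.right := fun i => (h i).imp And.left And.left
  rw [← inl_left_mul_inr_right x, ← inl_left_mul_inr_right y]
  refine ((commute_inl_inl fun i => ?_).mul_right (commute_inl_inr fun i => ?_)).mul_left
    ((commute_inl_inr fun i => ?_).symm.mul_right (hright.commute.map inr))
  · exact (h i).imp And.right And.right
  · exact (h i).imp And.right And.left
  · exact ((h i).imp And.left And.right).symm

theorem notMem_supp_iff {g : WG Γ} {i : ℕ} :
    i ∉ supp g ↔ (g : W Γ).right i = i ∧ (g : W Γ).left i = 1 := by
  simp [supp]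

theorem eventually_notMem_supp (g : WG Γ) : ∀ᶠ k in atTop, k ∉ supp g :=
  Nat.cofinite_eq_atTop ▸ ((g.2.1.union g.2.2).subset fun _ hi => hi).eventually_cofinite_notMem

theorem commute_of_forall_notMem_supp {g h : WG Γ} (hd : ∀ i, i ∉ supp g ∨ i ∉ supp h) :
    Commute g h :=
  Subtype.ext <| commute_of_disjoint_support fun i => by simpa only [notMem_supp_iff] using hd i

theorem mem_supp_swapW {i j k : ℕ} (hi : i ∈ supp (swapW (Γ := Γ) j k)) : i = j ∨ i = k := by
  by_contra hne
  push Not at hne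
  rcases hi with hi | hi
  · exact hi (Equiv.swap_apply_of_ne_of_ne hne.1 hne.2)
  · exact hi rfl

theorem mem_supp_seqW {γ : GammaE Γ} {i : ℕ} (hi : i ∈ supp (seqW γ)) : (γ : ℕ → Γ) i ≠ 1 :=
  hi.resolve_left (· rfl)

theorem permW_inv (s : SInf) : (permW (Γ := Γ) s)⁻¹ = permW s⁻¹ :=
  Subtype.ext (map_inv inr _).symm

theorem seqW_inv (γ : GammaE Γ) : (seqW γ)⁻¹ = seqW γ⁻¹ :=
  Subtype.ext (map_inv inl _).symm

theorem swapW_mul_self_s15 (j k : ℕ) : swapW (Γ := Γ) j k * swapW j k = 1 :=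
  Subtype.ext <| by
    rw [Subgroup.coe_mul, Subgroup.coe_one, swapW, permW, ← map_mul, Equiv.swap_mul_self, map_one]

theorem notMem_supp_swapW_conj {g : WG Γ} {j k : ℕ} (hk : k ∉ supp g) :
    j ∉ supp (swapW j k * g * swapW j k) := by
  obtain ⟨hright, hleft⟩ := notMem_supp_iff.mp hk
  refine notMem_supp_iff.mpr ⟨?_, ?_⟩
  · change Equiv.swap j k ((g : W Γ).right (Equiv.swap j k j)) = j
    simp [hright]
  · change (inr (Equiv.swap j k) * (g : W Γ) * inr (Equiv.swap j k)).left j = 1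
    simp [hleft]

end Wreath

section Commutant

variable {E : Type*} [NormedAddCommGroup E] [InnerProductSpace ℂ E]

theorem commutant_eq_centralizer (S : Set (E →L[ℂ] E)) : commutant S = S.centralizer := by
  ext T
  exact forall₂_congr fun _ _ => eq_comm

theorem mul_mem_commutant {S : Set (E →L[ℂ] E)} {a b : E →L[ℂ] E} (ha : a ∈ commutant S)
    (hb : b ∈ commutant S) : a * b ∈ commutant S := by
  rw [commutant_eq_centralizer] at *
  exact Set.mul_mem_centralizer ha hb

theorem pi_mem_vN {π : WG Γ →* (E →L[ℂ] E)} (g : WG Γ) : π g ∈ vN π :=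
  fun _ hB => (hB _ ⟨g, rfl⟩).symm

end Commutant

section Representation

variable {π : WG Γ →* (H →L[ℂ] H)}

theorem star_pi (hu : ∀ g, π g ∈ unitary (H →L[ℂ] H)) (g : WG Γ) : star (π g) = π g⁻¹ :=
  calc star (π g) = star (π g) * (π g * π g⁻¹) := by
        rw [← map_mul, mul_inv_cancel, map_one, mul_one]
    _ = π g⁻¹ := by rw [← mul_assoc, Unitary.star_mul_self_of_mem (hu g), one_mul]

theorem isSelfAdjoint_pi_swapW (hu : ∀ g, π g ∈ unitary (H →L[ℂ] H)) (j k : ℕ) :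
    IsSelfAdjoint (π (swapW j k)) := by
  rw [IsSelfAdjoint, star_pi hu, inv_eq_of_mul_eq_one_right (swapW_mul_self_s15 j k)]

variable {φ : WG Γ → ℂ} {ξ : H}

theorem inner_pi_apply_pi_apply (hGNS : IsGNS φ π ξ) (a b : WG Γ) :
    ⟪π a ξ, π b ξ⟫ = φ (a⁻¹ * b) := by
  rw [hGNS.inner_eq, map_mul, ← star_pi hGNS.unitary, ContinuousLinearMap.star_eq_adjoint]
  exact (ContinuousLinearMap.adjoint_inner_right _ _ _).symm

theorem exists_mem_commutant_apply_eq_permW (hcentral : IsSCentral φ) (hGNS : IsGNS φ π ξ)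
    (s : SInf) : ∃ R ∈ commutant (repSet π), R ξ = π (permW s) ξ := by
  have hgram : ∀ a b : WG Γ,
      ⟪π (a * permW s) ξ, π (b * permW s) ξ⟫ = ⟪π a ξ, π b ξ⟫ := fun a b => by
    rw [inner_pi_apply_pi_apply hGNS, inner_pi_apply_pi_apply hGNS, ← hcentral s⁻¹ (a⁻¹ * b),
      ← permW_inv, inv_inv]
    congr 1
    group
  obtain ⟨R, hR⟩ := exists_continuousLinearMap_apply_eq_of_inner_eq
    (w := fun g => π (g * permW s) ξ) hGNS.cyclic hgram
  have hπ : ∀ a b x, π a (π b x) = π (a * b) x := fun a b x => by rw [map_mul]; rfl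
  refine ⟨R, ?_, by simpa using hR 1⟩
  rintro _ ⟨g, rfl⟩
  refine ContinuousLinearMap.ext_on hGNS.cyclic ?_
  rintro _ ⟨h, rfl⟩
  change R (π g (π h ξ)) = π g (R (π h ξ))
  simp only [hπ, hR, mul_assoc]

theorem apply_pi_permW_eq_zero (hcentral : IsSCentral φ) (hGNS : IsGNS φ π ξ)
    {V : H →L[ℂ] H} (hV : V ∈ vN π) (hVξ : V ξ = 0) (s : SInf) : V (π (permW s) ξ) = 0 := by
  obtain ⟨R, hR, hRξ⟩ := exists_mem_commutant_apply_eq_permW hcentral hGNS s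
  rw [← hRξ]
  change (V * R) ξ = 0
  rw [hV R hR]
  change R (V ξ) = 0
  rw [hVξ, map_zero]

def ajGenerators (π : WG Γ →* (H →L[ℂ] H)) (O : H →L[ℂ] H) (j : ℕ) : Set (H →L[ℂ] H) :=
  {O} ∪ {T | ∃ γ : GammaE Γ, (∀ i, i ≠ j → (γ : ℕ → Γ) i = 1) ∧ T = π (seqW γ)}

variable {O : H →L[ℂ] H} {j : ℕ}

theorem Aj_subset_vN (hO : WeakOpTendsto (fun k => π (swapW j k)) atTop O) :
    Aj π O j ⊆ vN π := by
  have hgen : ajGenerators π O j ⊆ vN π := by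
    rintro _ (rfl | ⟨γ, -, rfl⟩)
    · exact fun _ hB =>
        hO.mul_comm_of_eventually (Eventually.of_forall fun _ => (hB _ ⟨_, rfl⟩).symm)
    · exact pi_mem_vN _
  change commutant (commutant (ajGenerators π O j)) ⊆ commutant (commutant (repSet π))
  simp only [vN, commutant_eq_centralizer] at hgen ⊢
  refine Set.centralizer_subset ?_
  simpa only [Set.centralizer_centralizer_centralizer] using Set.centralizer_subset hgen

theorem star_mem_Aj (hu : ∀ g, π g ∈ unitary (H →L[ℂ] H)) (hO : IsSelfAdjoint O)
    {V : H →L[ℂ] H} (hV : V ∈ Aj π O j) : star V ∈ Aj π O j := by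
  have hgen : ∀ a ∈ ajGenerators π O j, star a ∈ ajGenerators π O j := by
    rintro _ (rfl | ⟨γ, hγ, rfl⟩)
    · exact Or.inl hO
    · exact Or.inr ⟨γ⁻¹, fun i hi => by simp [hγ i hi], by rw [star_pi hu, seqW_inv]⟩
  change V ∈ commutant (commutant (ajGenerators π O j)) at hV
  change star V ∈ commutant (commutant (ajGenerators π O j))
  rw [commutant_eq_centralizer, commutant_eq_centralizer] at hV ⊢
  exact Set.star_mem_centralizer' (fun a ha => Set.star_mem_centralizer' hgen ha) hV

theorem pi_mem_commutant_ajGenerators (hO : WeakOpTendsto (fun k => π (swapW j k)) atTop O)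
    {g : WG Γ} (hg : j ∉ supp g) : π g ∈ commutant (ajGenerators π O j) := by
  rintro _ (rfl | ⟨γ, hγ, rfl⟩)
  · refine (hO.mul_comm_of_eventually ?_).symm
    filter_upwards [eventually_notMem_supp g] with k hk
    refine ((commute_of_forall_notMem_supp fun i => ?_).map π).eq
    by_cases hi : i ∈ supp g
    · refine Or.inl fun hs => ?_
      rcases mem_supp_swapW hs with rfl | rfl
      exacts [hg hi, hk hi]
    · exact Or.inr hi
  · refine ((commute_of_forall_notMem_supp fun i => ?_).map π).eq
    by_cases hi : i = j
    · exact Or.inl (hi ▸ hg)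
    · exact Or.inr fun hs => mem_supp_seqW hs (hγ i hi)

theorem commute_conj_swapW_pi (hO : WeakOpTendsto (fun k => π (swapW j k)) atTop O)
    {A : H →L[ℂ] H} (hA : A ∈ Aj π O j) {g : WG Γ} {k : ℕ} (hk : k ∉ supp g) :
    Commute (π (swapW j k) * A * π (swapW j k)) (π g) := by
  have hss : π (swapW j k) * π (swapW j k) = 1 := by rw [← map_mul, swapW_mul_self_s15, map_one]
  have hg : π g = π (swapW j k) * π (swapW j k * g * swapW j k) * π (swapW j k) := by
    rw [← map_mul, ← map_mul]
    simp only [← mul_assoc, swapW_mul_self_s15, one_mul]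
    rw [mul_assoc, swapW_mul_self_s15, mul_one]
  rw [hg]
  exact Commute.conj_of_mul_self_eq_one hss
    (hA _ (pi_mem_commutant_ajGenerators hO (notMem_supp_swapW_conj hk)))

theorem mem_center_of_weakOpTendsto_conj_swapW
    (hO : WeakOpTendsto (fun k => π (swapW j k)) atTop O) {A : H →L[ℂ] H} (hA : A ∈ Aj π O j)
    {U : Ultrafilter ℕ} (hU : ↑U ≤ (atTop : Filter ℕ)) {T : H →L[ℂ] H}
    (hT : WeakOpTendsto (fun k => π (swapW j k) * A * π (swapW j k)) U T) :
    T ∈ commutant (repSet π) ∩ vN π := by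
  refine ⟨?_, fun B hB => hT.mul_comm_of_eventually (Eventually.of_forall fun k => ?_)⟩
  · rintro _ ⟨g, rfl⟩
    exact hT.mul_comm_of_eventually <|
      ((eventually_notMem_supp g).filter_mono hU).mono fun k hk =>
        (commute_conj_swapW_pi hO hA hk).eq
  · exact mul_mem_commutant (mul_mem_commutant (pi_mem_vN _) (Aj_subset_vN hO hA))
      (pi_mem_vN _) B hB

end Representation

theorem statement_15_general {Γ : Type*} [Group Γ] {H : Type*} [NormedAddCommGroup H]
    [InnerProductSpace ℂ H] [CompleteSpace H]
    (φ : WG Γ → ℂ) (hcentral : IsSCentral φ)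
    (π : WG Γ →* (H →L[ℂ] H)) (ξ : H) (hGNS : IsGNS φ π ξ)
    (hfact : IsFactorial π)
    (O : ℕ → (H →L[ℂ] H)) (hOsa : ∀ i, IsSelfAdjoint (O i))
    (hO : ∀ (i : ℕ) (x y : H),
      Tendsto (fun j => ⟪y, π (swapW i j) x⟫) atTop (𝓝 ⟪y, O i x⟫))
    (j : ℕ)
    (P₀ : H →L[ℂ] H) (hP₀sa : IsSelfAdjoint P₀) (hP₀proj : P₀ * P₀ = P₀)
    (hP₀range : LinearMap.range (P₀ : H →ₗ[ℂ] H) = LinearMap.ker (O j : H →ₗ[ℂ] H))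
    (V : H →L[ℂ] H) (hV : V ∈ Aj π (O j) j)
    (hVred : V = (1 - P₀) * V * (1 - P₀)) (hVξ : V ξ = 0) :
    V = 0 := by
  have hu := hGNS.unitary
  set u : ℕ → H →L[ℂ] H := fun k => π (swapW j k)
  have hA : star V * V ∈ Aj π (O j) j := mul_mem_commutant (star_mem_Aj hu (hOsa j) hV) hV
  set U := Ultrafilter.of (atTop : Filter ℕ)
  have hU : ↑U ≤ (atTop : Filter ℕ) := Ultrafilter.of_le atTop
  obtain ⟨T, hT⟩ := exists_weakOpTendsto_of_norm_le U
    (A := fun k => u k * (star V * V) * u k) (C := ‖star V * V‖) fun k => by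
      rw [CStarRing.norm_mul_mem_unitary _ (hu _), CStarRing.norm_mem_unitary_mul _ (hu _)]
  obtain ⟨c, rfl⟩ := hfact T (mem_center_of_weakOpTendsto_conj_swapW (hO j) hA hU hT)
  have hVu : ∀ k, V (u k ξ) = 0 :=
    fun k => apply_pi_permW_eq_zero hcentral hGNS (Aj_subset_vN (hO j) hV) hVξ _
  have hcξ : c • ξ = 0 := by
    simpa using hT.apply_eq_zero fun k => by
      change u k (star V (V (u k ξ))) = 0
      rw [hVu k, map_zero, map_zero]
  obtain rfl : c = 0 := (smul_eq_zero.mp hcξ).resolve_right (norm_ne_zero_iff.mp (by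
    simp [hGNS.norm_one]))
  have hVO : V * O j = 0 := WeakOpTendsto.mul_eq_zero (fun x y => (hO j x y).mono_left hU)
    (WeakOpTendsto.tendsto_norm_apply (isSelfAdjoint_pi_swapW hu j) (by simpa using hT))
  calc V = (1 - P₀) * (V * (1 - P₀)) := by rw [← mul_assoc]; exact hVred
    _ = 0 := by
      rw [mul_one_sub_eq_zero_of_mul_eq_zero (hOsa j) hP₀sa hP₀proj hP₀range hVO, mul_zero]

theorem statement_15 {Γ : Type*} [Group Γ] {H : Type*} [NormedAddCommGroup H]
    [InnerProductSpace ℂ H] [CompleteSpace H]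
    (φ : WG Γ → ℂ) (hstate : IsState φ) (hcentral : IsSCentral φ)
    (π : WG Γ →* (H →L[ℂ] H)) (ξ : H) (hGNS : IsGNS φ π ξ)
    (hfact : IsFactorial π)
    (O : ℕ → (H →L[ℂ] H)) (hOsa : ∀ i, IsSelfAdjoint (O i))
    (hO : ∀ (i : ℕ) (x y : H),
      Tendsto (fun j => ⟪y, π (swapW i j) x⟫) atTop (𝓝 ⟪y, O i x⟫))
    (j : ℕ)
    (P₀ : H →L[ℂ] H) (hP₀sa : IsSelfAdjoint P₀) (hP₀proj : P₀ * P₀ = P₀)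
    (hP₀range : LinearMap.range (P₀ : H →ₗ[ℂ] H) = LinearMap.ker (O j : H →ₗ[ℂ] H))
    (V : H →L[ℂ] H) (hV : V ∈ Aj π (O j) j)
    (hVred : V = (1 - P₀) * V * (1 - P₀)) (hVξ : V ξ = 0) :
    V = 0 :=
  statement_15_general φ hcentral π ξ hGNS hfact O hOsa hO j P₀ hP₀sa hP₀proj hP₀range V hV hVred
    hVξ

end DN
end
end
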